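/- arXiv:2404.00410 — 2 statements merged into one kernel-verified Lean document; each statement's English description precedes it below -/
import Mathlib

section
/- For every integer n ≥ 20 and every integer m with (n+7)/2 ≤ m ≤ n−7 if n is odd, respectively (n+4)/2 ≤ m ≤ n−6 if n is even, there exists a partition p of n such that λ(p) = m. -/
/-- `λ(p) = (1/2)·Σ_{j=1}^k n_j·(n_j − 2j + 1)` for a finite sequence of naturals. -/
def transLam (L : List ℕ) : ℚ :=
  (∑ j ∈ Finset.range L.length,
    (L.getD j 0 : ℚ) * ((L.getD j 0 : ℚ) - 2 * ((j : ℚ) + 1) + 1)) / 2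

/-- A partition of `n`: a nonincreasing list of positive integers summing to `n`. -/
def IsPartitionOf (n : ℕ) (L : List ℕ) : Prop :=
  L.Pairwise (· ≥ ·) ∧ (∀ x ∈ L, 0 < x) ∧ L.sum = n

/-!
`λ(p)` is the sum of the contents `column − row` of the cells of the Young diagram of `p`.
For the diagrams `(p + q + a, p + b, T, 2^p, 1^q)` the quadratic terms in `p` and `q`
cancel, and `λ = λ(a, b, T) + (a + b − 2k) p + (a − k) q` with `k = 2 + |T|`.
For odd `n = 2N + 7` the heads `(3, 4)` and `(4, 3)` give, at fixed `n`, the values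
`N + 5 + p` and `2N + 6 − p`, which sweep out `[N + 5, 2N + 6]` except for one value;
that value is hit by the head `(6, 5, 5, 3)`. For even `n = 2N + 12` the heads
`(4, 5, 3)`, `(5, 4, 3)` and `(6, 5, 5, 4)` do the same for `[N + 8, 2N + 9]`.
-/

open List

theorem List.sum_range_getD_eq_sum {R : Type*} [AddCommMonoidWithOne R] (L : List ℕ) :
    ∑ j ∈ Finset.range L.length, (L.getD j 0 : R) = L.sum := by
  induction L with
  | nil => simp
  | cons x L ih =>
    rw [length_cons, Finset.sum_range_succ']
    simp only [getD_cons_succ, getD_cons_zero, ih, sum_cons, Nat.cast_add]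
    exact add_comm _ _

theorem transLam_nil : transLam [] = 0 := by
  simp [transLam]

theorem transLam_cons (x : ℕ) (L : List ℕ) :
    transLam (x :: L) = x * (x - 1 : ℚ) / 2 + transLam L - L.sum := by
  rw [transLam, transLam, ← L.sum_range_getD_eq_sum, length_cons, Finset.sum_range_succ']
  simp only [getD_cons_succ, getD_cons_zero, Nat.cast_add, Nat.cast_one, Nat.cast_zero]
  have shift (j : ℕ) (g : ℚ) :
      g * (g - 2 * (j + 1 + 1) + 1) = g * (g - 2 * (j + 1) + 1) - 2 * g := by ring
  simp only [shift, Finset.sum_sub_distrib, ← Finset.mul_sum]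
  ring

theorem transLam_append (L M : List ℕ) :
    transLam (L ++ M) = transLam L + transLam M - L.length * M.sum := by
  induction L with
  | nil => simp [transLam_nil]
  | cons x L ih =>
    simp only [cons_append, transLam_cons, ih, sum_append, length_cons]
    push_cast
    ring

theorem transLam_replicate (t c : ℕ) :
    transLam (replicate t c) = c * t * (c - t : ℚ) / 2 := by
  induction t with
  | zero => simp [transLam_nil]
  | succ t ih =>
    rw [replicate_succ, transLam_cons, ih]
    simp only [sum_replicate, smul_eq_mul, Nat.cast_mul, Nat.cast_succ]
    ring

theorem IsPartitionOf.append_replicate {n : ℕ} {H : List ℕ} (hH : IsPartitionOf n H) {c : ℕ}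
    (hc : 0 < c) (hcH : ∀ x ∈ H, c ≤ x) (t : ℕ) :
    IsPartitionOf (n + t * c) (H ++ replicate t c) := by
  obtain ⟨hsorted, hpos, hsum⟩ := hH
  refine ⟨pairwise_append.2 ⟨hsorted, pairwise_replicate.2 (Or.inr le_rfl), ?_⟩, ?_, ?_⟩
  · intro x hx y hy
    exact (eq_of_mem_replicate hy) ▸ hcH x hx
  · simp only [mem_append, mem_replicate]
    rintro x (hx | ⟨-, rfl⟩)
    exacts [hpos x hx, hc]
  · simp [hsum]

theorem exists_partition_of_family (a b : ℕ) (T : List ℕ) (p q : ℕ)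
    (hT : T.Pairwise (· ≥ ·)) (hTb : ∀ x ∈ T, 2 ≤ x ∧ x ≤ b) (hb : 2 ≤ b) (hab : b ≤ q + a)
    {n : ℕ} {m : ℚ} (hn : n = 4 * p + 2 * q + a + b + T.sum)
    (hm : m = transLam (a :: b :: T) + p * (a + b - 2 * (T.length + 2) : ℚ)
      + q * (a - (T.length + 2) : ℚ)) :
    ∃ L, IsPartitionOf n L ∧ transLam L = m := by
  subst hn hm
  set H := (p + q + a) :: (p + b) :: T
  have hH2 : ∀ x ∈ H, 2 ≤ x := by
    simp only [H, mem_cons]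
    rintro x (rfl | rfl | hx)
    exacts [by omega, by omega, (hTb x hx).1]
  have hH : IsPartitionOf (2 * p + q + a + b + T.sum) H := by
    refine ⟨?_, fun x hx => lt_of_lt_of_le two_pos (hH2 x hx), ?_⟩
    · simp only [H, pairwise_cons, mem_cons]
      refine ⟨?_, fun x hx => (hTb x hx).2.trans (by omega), hT⟩
      rintro x (rfl | hx)
      exacts [by omega, by linarith [(hTb x hx).2]]
    · simp only [H, sum_cons]
      ring
  have hHtwos := hH.append_replicate two_pos hH2 p
  refine ⟨H ++ replicate p 2 ++ replicate q 1, ?_, ?_⟩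
  · convert hHtwos.append_replicate one_pos hHtwos.2.1 q using 1
    ring
  · rw [transLam_append, transLam_append, transLam_cons, transLam_cons, transLam_cons,
      transLam_cons, transLam_replicate, transLam_replicate]
    simp only [H, sum_replicate, length_append, length_cons, length_replicate, smul_eq_mul,
      sum_cons]
    push_cast
    ring
theorem exists_partition_odd {N m : ℕ} (hN : 6 ≤ N) (hlo : N + 5 ≤ m)
    (hhi : m ≤ 2 * N + 6) :
    ∃ L, IsPartitionOf (2 * N + 7) L ∧ transLam L = m := by
  by_cases h₁ : 2 * m ≤ 3 * N + 9
  · obtain ⟨p, q, rfl, rfl, hq⟩ : ∃ p q, N = 2 * p + q ∧ m = 3 * p + q + 5 ∧ 1 ≤ q :=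
      ⟨m - N - 5, 3 * N + 10 - 2 * m, by omega, by omega, by omega⟩
    refine exists_partition_of_family 3 4 [] p q (by simp) (by simp) (by norm_num) (by omega)
      (by simp; ring) ?_
    norm_num [transLam_cons, transLam_nil]
    ring
  by_cases h₂ : 3 * N + 12 ≤ 2 * m
  · obtain ⟨p, q, rfl, rfl⟩ : ∃ p q, N = 2 * p + q ∧ m = 3 * p + 2 * q + 6 :=
      ⟨2 * N + 6 - m, 2 * m - 3 * N - 12, by omega, by omega⟩
    refine exists_partition_of_family 4 3 [] p q (by simp) (by simp) (by norm_num) (by omega)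
      (by simp; ring) ?_
    norm_num [transLam_cons, transLam_nil]
    ring
  obtain ⟨p, q, rfl, hq⟩ : ∃ p q, N = 2 * p + q + 6 ∧ q ≤ 1 :=
    ⟨(N - 6) / 2, N % 2, by omega, by omega⟩
  obtain rfl : m = 3 * p + 2 * q + 14 := by omega
  refine exists_partition_of_family 6 5 [5, 3] p q (by simp) (by simp) (by norm_num) (by omega)
    (by simp; ring) ?_
  norm_num [transLam_cons, transLam_nil]
  ring

theorem exists_partition_even {N m : ℕ} (hN : 4 ≤ N) (hlo : N + 8 ≤ m)
    (hhi : m ≤ 2 * N + 9) :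
    ∃ L, IsPartitionOf (2 * N + 12) L ∧ transLam L = m := by
  by_cases h₁ : 2 * m ≤ 3 * N + 15
  · obtain ⟨p, q, rfl, rfl, hq⟩ : ∃ p q, N = 2 * p + q ∧ m = 3 * p + q + 8 ∧ 1 ≤ q :=
      ⟨m - N - 8, 3 * N + 16 - 2 * m, by omega, by omega, by omega⟩
    refine exists_partition_of_family 4 5 [3] p q (by simp) (by simp) (by norm_num) (by omega)
      (by simp; ring) ?_
    norm_num [transLam_cons, transLam_nil]
    ring
  by_cases h₂ : 3 * N + 18 ≤ 2 * m
  · obtain ⟨p, q, rfl, rfl⟩ : ∃ p q, N = 2 * p + q ∧ m = 3 * p + 2 * q + 9 :=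
      ⟨2 * N + 9 - m, 2 * m - 3 * N - 18, by omega, by omega⟩
    refine exists_partition_of_family 5 4 [3] p q (by simp) (by simp) (by norm_num) (by omega)
      (by simp; ring) ?_
    norm_num [transLam_cons, transLam_nil]
    ring
  obtain ⟨p, q, rfl, hq⟩ : ∃ p q, N = 2 * p + q + 4 ∧ q ≤ 1 :=
    ⟨(N - 4) / 2, N % 2, by omega, by omega⟩
  obtain rfl : m = 3 * p + 2 * q + 14 := by omega
  refine exists_partition_of_family 6 5 [5, 4] p q (by simp) (by simp) (by norm_num) (by omega)
    (by simp; ring) ?_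
  norm_num [transLam_cons, transLam_nil]
  ring

theorem segment_S2_in_spectrum (n : ℕ) (hn : 20 ≤ n) (m : ℕ)
    (hodd : Odd n → n + 7 ≤ 2 * m ∧ m ≤ n - 7)
    (heven : Even n → n + 4 ≤ 2 * m ∧ m ≤ n - 6) :
    ∃ L : List ℕ, IsPartitionOf n L ∧ transLam L = (m : ℚ) := by
  rcases Nat.even_or_odd n with hev | hod
  · obtain ⟨hlo, hhi⟩ := heven hev
    obtain ⟨N, rfl⟩ : ∃ N, n = 2 * N + 12 := ⟨n / 2 - 6, by obtain ⟨k, hk⟩ := hev; omega⟩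
    exact exists_partition_even (by omega) (by omega) (by omega)
  · obtain ⟨hlo, hhi⟩ := hodd hod
    obtain ⟨N, rfl⟩ : ∃ N, n = 2 * N + 7 := ⟨n / 2 - 3, by obtain ⟨k, hk⟩ := hod; omega⟩
    exact exists_partition_odd (by omega) (by omega) (by omega)
end

section
/- Let n ≥ 21 be odd and let m be an even integer with (n+7)/2 ≤ m ≤ n−7. Then the sequence consisting of m/2, then (n+3−m)/2, then 5, then the number 2 repeated (n−3−m)/2 times, then the number 1 repeated m − (n+7)/2 times, is a partition of n and its value λ equals m. -/
lemma transLam_append_singleton (L : List ℕ) (x : ℕ) :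
    transLam (L ++ [x]) = transLam L + x * ((x : ℚ) - 2 * (L.length + 1) + 1) / 2 := by
  simp only [transLam, List.length_append, List.length_singleton]
  rw [Finset.sum_range_succ, ← add_div, List.getD_append_right _ _ _ _ le_rfl]
  congr 2
  · refine Finset.sum_congr rfl fun j hj => ?_
    rw [List.getD_append _ _ _ _ (Finset.mem_range.mp hj)]
  · simp

lemma transLam_append_replicate (L : List ℕ) (x k : ℕ) :
    transLam (L ++ List.replicate k x) =
      transLam L + (k : ℚ) * x * ((x : ℚ) - 2 * L.length - k) / 2 := by
  induction k with
  | zero => simp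
  | succ k ih =>
    rw [List.replicate_succ', ← List.append_assoc, transLam_append_singleton, ih,
      List.length_append, List.length_replicate]
    push_cast
    ring

lemma IsPartitionOf.append_replicate_s15 {s : ℕ} {L : List ℕ} (hL : IsPartitionOf s L)
    {a : ℕ} (ha : 0 < a) (hLa : ∀ x ∈ L, a ≤ x) (k : ℕ) :
    IsPartitionOf (s + k * a) (L ++ List.replicate k a) := by
  obtain ⟨hsorted, hpos, hsum⟩ := hL
  refine ⟨List.pairwise_append.mpr ⟨hsorted, List.pairwise_replicate.mpr (Or.inr le_rfl), ?_⟩,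
    ?_, by simp [hsum]⟩
  · intro x hx y hy
    rw [List.eq_of_mem_replicate hy]
    exact hLa x hx
  · intro x hx
    rcases List.mem_append.mp hx with hx | hx
    · exact hpos x hx
    · rwa [List.eq_of_mem_replicate hx]

lemma isPartitionOf_oddEvenFamily (d c : ℕ) :
    IsPartitionOf (4 * d + 2 * c + 21)
      ([d + c + 7, d + 5, 5] ++ List.replicate (d + 2) 2 ++ List.replicate c 1) := by
  have hhead : IsPartitionOf (2 * d + c + 17) [d + c + 7, d + 5, 5] := by
    refine ⟨by simp; omega, by simp, by simp; omega⟩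
  have hmiddle := hhead.append_replicate_s15 two_pos (by simp) (d + 2)
  have hall := hmiddle.append_replicate_s15 one_pos
    (by simp only [List.mem_append, List.mem_replicate]; grind) c
  convert hall using 1
  ring

lemma transLam_oddEvenFamily (d c : ℕ) :
    transLam ([d + c + 7, d + 5, 5] ++ List.replicate (d + 2) 2 ++ List.replicate c 1) =
      2 * d + 2 * c + 14 := by
  have hhead : transLam [d + c + 7, d + 5, 5] =
      (((d : ℚ) + c + 7) * (d + c + 6) + ((d : ℚ) + 5) * (d + 2)) / 2 := by
    simp [transLam, Finset.sum_range_succ]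
    ring
  rw [transLam_append_replicate, transLam_append_replicate, hhead, List.length_append,
    List.length_replicate]
  simp only [List.length_cons, List.length_nil]
  push_cast
  ring

theorem case_odd_n_even_lambda_general (n m : ℕ) (hnodd : Odd n) (hmeven : Even m)
    (h1 : n + 7 ≤ 2 * m) (h2 : m ≤ n - 7) :
    IsPartitionOf n
      ([m / 2, (n + 3 - m) / 2, 5] ++ List.replicate ((n - 3 - m) / 2) 2
        ++ List.replicate (m - (n + 7) / 2) 1) ∧
    transLam
      ([m / 2, (n + 3 - m) / 2, 5] ++ List.replicate ((n - 3 - m) / 2) 2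
        ++ List.replicate (m - (n + 7) / 2) 1) = (m : ℚ) := by
  obtain ⟨d, c, rfl, rfl⟩ : ∃ d c, n = 4 * d + 2 * c + 21 ∧ m = 2 * d + 2 * c + 14 := by
    obtain ⟨a, rfl⟩ := hmeven
    obtain ⟨b, rfl⟩ := hnodd
    exact ⟨(2 * b - 2 * a - 6) / 2, (4 * a - 2 * b - 8) / 2, by omega, by omega⟩
  have e1 : (2 * d + 2 * c + 14) / 2 = d + c + 7 := by omega
  have e2 : (4 * d + 2 * c + 21 + 3 - (2 * d + 2 * c + 14)) / 2 = d + 5 := by omega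
  have e3 : (4 * d + 2 * c + 21 - 3 - (2 * d + 2 * c + 14)) / 2 = d + 2 := by omega
  have e4 : 2 * d + 2 * c + 14 - (4 * d + 2 * c + 21 + 7) / 2 = c := by omega
  rw [e1, e2, e3, e4]
  exact ⟨isPartitionOf_oddEvenFamily d c, by exact_mod_cast transLam_oddEvenFamily d c⟩

theorem case_odd_n_even_lambda (n m : ℕ) (hn : 21 ≤ n) (hnodd : Odd n) (hmeven : Even m)
    (h1 : n + 7 ≤ 2 * m) (h2 : m ≤ n - 7) :
    IsPartitionOf n
      ([m / 2, (n + 3 - m) / 2, 5] ++ List.replicate ((n - 3 - m) / 2) 2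
        ++ List.replicate (m - (n + 7) / 2) 1) ∧
    transLam
      ([m / 2, (n + 3 - m) / 2, 5] ++ List.replicate ((n - 3 - m) / 2) 2
        ++ List.replicate (m - (n + 7) / 2) 1) = (m : ℚ) :=
  case_odd_n_even_lambda_general n m hnodd hmeven h1 h2
end
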